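/- Let n ≥ 2 and let M be an integer with n+1 ≤ M ≤ 2n. Set α₁ := 1 − M(n−1)/(n(M−2)), ρ₁ := (M−2)/(M(1+α₁)), and ρ₀ := 1 − 1/M − ρ₁. Let h : [−1,1) → ℝ be absolutely monotone, i.e., infinitely differentiable with h^{(i)}(t) ≥ 0 for all integers i ≥ 0 and all t ∈ [−1,1). Then every set C ⊆ S^{n−1} of M points satisfies E_h(C) ≥ M²(ρ₀·h(−1) + ρ₁·h(α₁)). -/

import Mathlib

open scoped RealInnerProductSpace

/-- `h` is absolutely monotone on `[-1,1)`: it is infinitely differentiable there and all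
its derivatives are nonnegative there. -/
def AbsolutelyMonotone (h : ℝ → ℝ) : Prop :=
  ContDiffOn ℝ (⊤ : ℕ∞) h (Set.Ico (-1 : ℝ) 1) ∧
    ∀ i : ℕ, ∀ t ∈ Set.Ico (-1 : ℝ) 1,
      0 ≤ iteratedDerivWithin i h (Set.Ico (-1 : ℝ) 1) t

/-- The `h`-energy of a finite set `C` on the sphere: the sum of `h(⟨x,y⟩)` over ordered
pairs of distinct points of `C`. -/
noncomputable def sphereEnergy (n : ℕ) (h : ℝ → ℝ) (C : Finset (EuclideanSpace ℝ (Fin n))) : ℝ :=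
  letI := Classical.decEq (EuclideanSpace ℝ (Fin n))
  ∑ p ∈ C.offDiag, h ⟪p.1, p.2⟫

open Set
private lemma iterIco_eq (h : ℝ → ℝ) (i : ℕ) {x : ℝ} (hx : x ∈ Set.Ioo (-1:ℝ) 1) :
    iteratedDerivWithin i h (Set.Ico (-1:ℝ) 1) x = iteratedDeriv i h x := by
  have hst : Set.Ico (-1:ℝ) 1 =ᶠ[nhds x] Set.Ioo (-1:ℝ) 1 :=
    Filter.eventuallyEq_set.2 <| by
      filter_upwards [isOpen_Ioo.mem_nhds hx] with y hy
      exact ⟨fun _ => hy, fun hy' => ⟨hy'.1.le, hy'.2⟩⟩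
  rw [iteratedDerivWithin, iteratedDeriv, iteratedFDerivWithin_congr_set hst,
    iteratedFDerivWithin_of_isOpen i isOpen_Ioo hx]

private lemma key_interp (h : ℝ → ℝ) (hh : AbsolutelyMonotone h)
    {α : ℝ} (hα : α ∈ Set.Ioo (-1:ℝ) 1) :
    0 ≤ (h α - h (-1)) / (α + 1) ∧
    0 ≤ (deriv h α - (h α - h (-1)) / (α + 1)) / (α + 1) ∧
    ∀ t ∈ Set.Ico (-1:ℝ) 1,
      h (-1) + (h α - h (-1)) / (α + 1) * (t + 1)
        + (deriv h α - (h α - h (-1)) / (α + 1)) / (α + 1) * ((t + 1) * (t - α)) ≤ h t := by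
  have hα1 : (0:ℝ) < α + 1 := by linarith [hα.1]
  set s : Set ℝ := Set.Ioo (-1:ℝ) 1 with hs_def
  have hsub : s ⊆ Set.Ico (-1:ℝ) 1 := Set.Ioo_subset_Ico_self
  have hs : ContDiffOn ℝ (⊤ : ℕ∞) h s := hh.1.mono hsub
  have hD : ∀ i : ℕ, ContDiffOn ℝ (⊤ : ℕ∞) (iteratedDeriv i h) s := by
    intro i
    induction i with
    | zero => simpa [iteratedDeriv_zero] using hs
    | succ i ih =>
      rw [iteratedDeriv_succ]
      exact ih.deriv_of_isOpen isOpen_Ioo (by simp)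
  have hDd : ∀ i : ℕ, ∀ x ∈ s, HasDerivAt (iteratedDeriv i h) (iteratedDeriv (i+1) h x) x := by
    intro i x hx
    have := (((hD i).contDiffAt (isOpen_Ioo.mem_nhds hx)).differentiableAt (by simp)).hasDerivAt
    rw [iteratedDeriv_succ]
    exact this
  have hDpos : ∀ i : ℕ, ∀ x ∈ s, 0 ≤ iteratedDeriv i h x := by
    intro i x hx
    rw [← iterIco_eq h i hx]
    exact hh.2 i x (hsub hx)
  have hDc : ∀ i : ℕ, ContinuousOn (iteratedDeriv i h) s := fun i => (hD i).continuousOn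
  have hd1 : deriv h = iteratedDeriv 1 h := (iteratedDeriv_one).symm
  have mono1 : MonotoneOn (iteratedDeriv 1 h) s := by
    apply monotoneOn_of_deriv_nonneg (convex_Ioo _ _) (hDc 1)
    · intro x hx
      rw [interior_Ioo] at hx
      exact ((hDd 1 x hx).differentiableAt).differentiableWithinAt
    · intro x hx
      rw [interior_Ioo] at hx
      rw [(hDd 1 x hx).deriv]
      exact hDpos 2 x hx
  set A1 : ℝ := (h α - h (-1)) / (α + 1) with hA1_def
  set A2 : ℝ := (deriv h α - A1) / (α + 1) with hA2_def
  have hD0 : ∀ x ∈ s, HasDerivAt h (iteratedDeriv 1 h x) x := by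
    intro x hx
    simpa [iteratedDeriv_zero] using hDd 0 x hx
  obtain ⟨c, hc, hceq⟩ :=
    exists_hasDerivAt_eq_slope h (iteratedDeriv 1 h) hα.1
      (hh.1.continuousOn.mono (fun y hy => ⟨hy.1, lt_of_le_of_lt hy.2 hα.2⟩))
      (fun x hx => hD0 x ⟨hx.1, hx.2.trans hα.2⟩)
  have hcs : c ∈ s := ⟨hc.1, hc.2.trans hα.2⟩
  have hcA1 : iteratedDeriv 1 h c = A1 := by
    rw [hceq, hA1_def]; congr 1; ring
  have hA1pos : 0 ≤ A1 := hcA1 ▸ hDpos 1 c hcs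
  have hαs : α ∈ s := hα
  have hA2pos : 0 ≤ A2 := by
    rw [hA2_def]
    apply div_nonneg _ hα1.le
    rw [sub_nonneg, hd1, ← hcA1]
    exact mono1 hcs hαs hc.2.le
  refine ⟨hA1pos, hA2pos, ?_⟩
  set g : ℝ → ℝ := fun t => h t - (h (-1) + A1 * (t + 1) + A2 * ((t + 1) * (t - α))) with hg_def
  set g1 : ℝ → ℝ := fun t => iteratedDeriv 1 h t - (A1 + A2 * (2*t + (1 - α))) with hg1_def
  set g2 : ℝ → ℝ := fun t => iteratedDeriv 2 h t - 2 * A2 with hg2_def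
  have hg' : ∀ x ∈ s, HasDerivAt g (g1 x) x := by
    intro x hx
    have key : HasDerivAt (fun t : ℝ => h (-1) + A1 * (t + 1) + A2 * ((t + 1) * (t - α)))
        (A1 * 1 + A2 * (1 * (x - α) + (x + 1) * 1)) x :=
      ((((hasDerivAt_id x).add_const (1:ℝ)).const_mul A1).const_add (h (-1))).add
        ((((hasDerivAt_id x).add_const (1:ℝ)).mul ((hasDerivAt_id x).sub_const α)).const_mul A2)
    have key2 : HasDerivAt (fun t : ℝ => h (-1) + A1 * (t + 1) + A2 * ((t + 1) * (t - α)))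
        (A1 + A2 * (2*x + (1 - α))) x := by
      convert key using 1; ring
    exact (hD0 x hx).sub key2
  have hg1' : ∀ x ∈ s, HasDerivAt g1 (g2 x) x := by
    intro x hx
    have key : HasDerivAt (fun t : ℝ => A1 + A2 * (2*t + (1 - α))) (A2 * (2 * 1)) x :=
      ((((hasDerivAt_id x).const_mul (2:ℝ)).add_const (1 - α)).const_mul A2).const_add A1
    have key2 : HasDerivAt (fun t : ℝ => A1 + A2 * (2*t + (1 - α))) (2 * A2) x := by
      convert key using 1; ring
    exact (hDd 1 x hx).sub key2
  have hg2' : ∀ x ∈ s, HasDerivAt g2 (iteratedDeriv 3 h x) x := by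
    intro x hx
    exact (hDd 2 x hx).sub_const (2 * A2)
  have hgc : ContinuousOn g (Set.Ico (-1:ℝ) 1) := by
    apply hh.1.continuousOn.sub
    apply Continuous.continuousOn
    fun_prop
  have hg1c : ContinuousOn g1 s := by
    apply (hDc 1).sub
    apply Continuous.continuousOn
    fun_prop
  have hg2c : ContinuousOn g2 s := (hDc 2).sub continuousOn_const
  have hgm1 : g (-1) = 0 := by
    show h (-1) - (h (-1) + A1 * ((-1) + 1) + A2 * (((-1) + 1) * ((-1) - α))) = 0
    ring
  have hA1mul : A1 * (α + 1) = h α - h (-1) := by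
    rw [hA1_def]; exact div_mul_cancel₀ _ hα1.ne'
  have hA2mul : A2 * (α + 1) = deriv h α - A1 := by
    rw [hA2_def]; exact div_mul_cancel₀ _ hα1.ne'
  have hgα : g α = 0 := by
    show h α - (h (-1) + A1 * (α + 1) + A2 * ((α + 1) * (α - α))) = 0
    rw [hA1mul]; ring
  have hg1α : g1 α = 0 := by
    show iteratedDeriv 1 h α - (A1 + A2 * (2*α + (1 - α))) = 0
    have e : (2:ℝ)*α + (1 - α) = α + 1 := by ring
    rw [e, hA2mul, hd1]; ring
  -- Rolle: ξ with g1 ξ = 0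
  obtain ⟨ξ, hξ, hξ0⟩ := exists_deriv_eq_zero hα.1
    (hgc.mono (fun y hy => ⟨hy.1, lt_of_le_of_lt hy.2 hα.2⟩)) (hgm1.trans hgα.symm)
  have hξs : ξ ∈ s := ⟨hξ.1, hξ.2.trans hα.2⟩
  have g1ξ : g1 ξ = 0 := by rw [← (hg' ξ hξs).deriv]; exact hξ0
  -- Rolle: η with g2 η = 0
  obtain ⟨η, hη, hη0⟩ := exists_deriv_eq_zero hξ.2
    (hg1c.mono (fun y hy => ⟨lt_of_lt_of_le hξ.1 hy.1, lt_of_le_of_lt hy.2 hα.2⟩))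
    (g1ξ.trans hg1α.symm)
  have hηs : η ∈ s := ⟨lt_trans hξ.1 hη.1, lt_trans hη.2 hα.2⟩
  have g2η : g2 η = 0 := by rw [← (hg1' η hηs).deriv]; exact hη0
  -- g2 is monotone
  have mono2 : MonotoneOn g2 s := by
    apply monotoneOn_of_deriv_nonneg (convex_Ioo _ _) hg2c
    · intro x hx; rw [interior_Ioo] at hx
      exact ((hg2' x hx).differentiableAt).differentiableWithinAt
    · intro x hx; rw [interior_Ioo] at hx
      rw [(hg2' x hx).deriv]; exact hDpos 3 x hx
  have g2nonneg : ∀ x ∈ s, η ≤ x → 0 ≤ g2 x := fun x hx hxη => by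
    have := mono2 hηs hx hxη; rwa [g2η] at this
  have g2nonpos : ∀ x ∈ s, x ≤ η → g2 x ≤ 0 := fun x hx hxη => by
    have := mono2 hx hηs hxη; rwa [g2η] at this
  -- g1 is monotone on [η, 1)
  have hIco_sub : Set.Ico η 1 ⊆ s := fun y hy => ⟨lt_of_lt_of_le hηs.1 hy.1, hy.2⟩
  have monog1 : MonotoneOn g1 (Set.Ico η 1) := by
    apply monotoneOn_of_deriv_nonneg (convex_Ico _ _) (hg1c.mono hIco_sub)
    · intro x hx; rw [interior_Ico] at hx
      exact ((hg1' x (hIco_sub (Set.Ioo_subset_Ico_self hx))).differentiableAt).differentiableWithinAt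
    · intro x hx; rw [interior_Ico] at hx
      have hxs := hIco_sub (Set.Ioo_subset_Ico_self hx)
      rw [(hg1' x hxs).deriv]
      exact g2nonneg x hxs hx.1.le
  have hηα : η < α := hη.2
  have hα_mem : α ∈ Set.Ico η 1 := ⟨hηα.le, hα.2⟩
  have g1nonpos : ∀ x ∈ Set.Icc η α, g1 x ≤ 0 := fun x hx => by
    have := monog1 ⟨hx.1, lt_of_le_of_lt hx.2 hα.2⟩ hα_mem hx.2
    rwa [hg1α] at this
  have g1nonneg : ∀ x ∈ Set.Ico α 1, 0 ≤ g1 x := fun x hx => by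
    have := monog1 hα_mem ⟨hηα.le.trans hx.1, hx.2⟩ hx.1
    rwa [hg1α] at this
  -- g ≥ 0 on [α, 1)
  have ghi : ∀ x ∈ Set.Ico α 1, 0 ≤ g x := by
    have hmono : MonotoneOn g (Set.Ico α 1) := by
      apply monotoneOn_of_deriv_nonneg (convex_Ico _ _)
        (hgc.mono (fun y hy => ⟨hα.1.le.trans hy.1, hy.2⟩))
      · intro y hy; rw [interior_Ico] at hy
        have hys : y ∈ s := ⟨lt_trans hα.1 hy.1, hy.2⟩
        exact ((hg' y hys).differentiableAt).differentiableWithinAt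
      · intro y hy; rw [interior_Ico] at hy
        have hys : y ∈ s := ⟨lt_trans hα.1 hy.1, hy.2⟩
        rw [(hg' y hys).deriv]
        exact g1nonneg y ⟨hy.1.le, hy.2⟩
    intro x hx
    have := hmono ⟨le_rfl, hα.2⟩ hx hx.1
    rwa [hgα] at this
  -- g ≥ 0 on [η, α]
  have gmid : ∀ x ∈ Set.Icc η α, 0 ≤ g x := by
    have hanti : AntitoneOn g (Set.Icc η α) := by
      apply antitoneOn_of_deriv_nonpos (convex_Icc _ _)
        (hgc.mono (fun y hy => ⟨hηs.1.le.trans hy.1, lt_of_le_of_lt hy.2 hα.2⟩))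
      · intro y hy; rw [interior_Icc] at hy
        have hys : y ∈ s := ⟨lt_trans hηs.1 hy.1, lt_trans hy.2 hα.2⟩
        exact ((hg' y hys).differentiableAt).differentiableWithinAt
      · intro y hy; rw [interior_Icc] at hy
        have hys : y ∈ s := ⟨lt_trans hηs.1 hy.1, lt_trans hy.2 hα.2⟩
        rw [(hg' y hys).deriv]
        exact g1nonpos y ⟨hy.1.le, hy.2.le⟩
    intro x hx
    have := hanti hx ⟨hηα.le, le_rfl⟩ hx.2
    rwa [hgα] at this
  -- g ≥ 0 on [-1, η] by concavity
  have hneg_le_η : (-1:ℝ) ≤ η := (lt_trans hξ.1 hη.1).le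
  have gη0 : 0 ≤ g η := gmid η ⟨le_rfl, hηα.le⟩
  have glo : ∀ x ∈ Set.Icc (-1:ℝ) η, 0 ≤ g x := by
    have hIccsub : Set.Icc (-1:ℝ) η ⊆ Set.Ico (-1:ℝ) 1 :=
      fun y hy => ⟨hy.1, lt_of_le_of_lt hy.2 hηs.2⟩
    have hconc : ConcaveOn ℝ (Set.Icc (-1:ℝ) η) g := by
      apply concaveOn_of_hasDerivWithinAt2_nonpos (f' := g1) (f'' := g2) (convex_Icc _ _)
        (hgc.mono hIccsub)
      · intro y hy; rw [interior_Icc] at hy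
        have hys : y ∈ s := ⟨hy.1, lt_trans hy.2 hηs.2⟩
        exact ((hg' y hys).hasDerivWithinAt)
      · intro y hy; rw [interior_Icc] at hy
        have hys : y ∈ s := ⟨hy.1, lt_trans hy.2 hηs.2⟩
        exact ((hg1' y hys).hasDerivWithinAt)
      · intro y hy; rw [interior_Icc] at hy
        have hys : y ∈ s := ⟨hy.1, lt_trans hy.2 hηs.2⟩
        exact g2nonpos y hys hy.2.le
    intro x hx
    obtain ⟨lam, mu, hlam, hmu, hsum, hcomb⟩ := (Convex.mem_Icc hneg_le_η).1 hx
    have hle := hconc.2 (Set.left_mem_Icc.2 hneg_le_η) (Set.right_mem_Icc.2 hneg_le_η)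
      hlam hmu hsum
    simp only [smul_eq_mul] at hle
    rw [hcomb, hgm1] at hle
    nlinarith [mul_nonneg hmu gη0]
  -- conclude
  intro t ht
  have hgt : 0 ≤ g t := by
    rcases le_total t η with h1 | h1
    · exact glo t ⟨ht.1, h1⟩
    · rcases le_total t α with h2 | h2
      · exact gmid t ⟨h1, h2⟩
      · exact ghi t ⟨h2, ht.2⟩
  have h2 : 0 ≤ h t - (h (-1) + A1 * (t + 1) + A2 * ((t + 1) * (t - α))) := hgt
  linarith


private lemma quadAux (n M A1 A2 hm α ρ0 ρ1 : ℝ) (hn : 2 ≤ n) (hM : 3 ≤ M) (hMn : n + 1 ≤ M)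
    (hα : α = 1 - M*(n-1)/(n*(M-2)))
    (hρ₁ : ρ1 = (M-2)/(M*(1+α)))
    (hρ₀ : ρ0 = 1 - 1/M - ρ1) :
    M ^ 2 * (ρ0 * hm + ρ1 * (hm + A1*(α + 1)))
      = (hm + A1 - A2*α) * M^2 + A2*(M^2/n)
        - M*(hm + 2*A1 + A2*(2*(1 - α))) := by
  have hn0 : n ≠ 0 := by linarith
  have hM0 : M ≠ 0 := by linarith
  have hM2 : M - 2 ≠ 0 := by intro h; nlinarith
  have hden : n * (M - 2) ≠ 0 := mul_ne_zero hn0 hM2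
  have h1a : 1 + α ≠ 0 := by
    have hpos : 0 < M*(n+1) - 4*n := by nlinarith [sq_nonneg (n-1)]
    have : 1 + α = (M*(n+1) - 4*n)/(n*(M-2)) := by
      rw [hα]; field_simp; ring
    rw [this]
    exact div_ne_zero (by linarith) hden
  have f0 : M * (1/M) = 1 := by field_simp
  have f1 : ρ1 * (α + 1) = (M-2) * (1/M) := by
    rw [hρ₁]; rw [div_mul_eq_mul_div, div_eq_iff (by exact mul_ne_zero hM0 h1a)]
    field_simp; ring
  have f2 : M * (1/n - α) = 2*(1 - α) := by
    rw [hα]; field_simp; ring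
  rw [hρ₀]
  linear_combination (M^2*A1)*f1 + (-(M*A2))*f2 + (A1*M*(M-2) - M*hm)*f0


private lemma inner_eq_sum (n : ℕ) (x y : EuclideanSpace ℝ (Fin n)) :
    ⟪x, y⟫ = ∑ i, x i * y i := by
  simp [PiLp.inner_apply, RCLike.inner_apply, conj_trivial, mul_comm]

private lemma s1_nonneg (n : ℕ) (C : Finset (EuclideanSpace ℝ (Fin n))) :
    0 ≤ ∑ x ∈ C, ∑ y ∈ C, ⟪x, y⟫ := by
  have : ∑ x ∈ C, ∑ y ∈ C, ⟪x, y⟫ = ⟪∑ x ∈ C, x, ∑ y ∈ C, y⟫ := by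
    rw [sum_inner]
    exact Finset.sum_congr rfl fun x _ => (inner_sum _ _ _).symm
  rw [this]
  exact real_inner_self_nonneg

private lemma gram_bound (n : ℕ) (hn : 1 ≤ n) (C : Finset (EuclideanSpace ℝ (Fin n)))
    (hnorm : ∀ x ∈ C, ‖x‖ = 1) :
    (C.card : ℝ)^2 ≤ (n : ℝ) * ∑ x ∈ C, ∑ y ∈ C, ⟪x, y⟫^2 := by
  set G : Fin n → Fin n → ℝ := fun i j => ∑ x ∈ C, x i * x j with hG
  have hS2 : ∑ x ∈ C, ∑ y ∈ C, ⟪x, y⟫^2 = ∑ i : Fin n, ∑ j : Fin n, (G i j)^2 := by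
    have step : ∑ x ∈ C, ∑ y ∈ C, ⟪x, y⟫^2
        = ∑ x ∈ C, ∑ y ∈ C, ∑ i : Fin n, ∑ j : Fin n, (x i * x j) * (y i * y j) := by
      refine Finset.sum_congr rfl fun x _ => Finset.sum_congr rfl fun y _ => ?_
      rw [inner_eq_sum, sq, Finset.sum_mul_sum]
      exact Finset.sum_congr rfl fun i _ => Finset.sum_congr rfl fun j _ => by ring
    rw [step]
    calc ∑ x ∈ C, ∑ y ∈ C, ∑ i : Fin n, ∑ j : Fin n, (x i * x j) * (y i * y j)
        = ∑ x ∈ C, ∑ i : Fin n, ∑ y ∈ C, ∑ j : Fin n, (x i * x j) * (y i * y j) :=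
          Finset.sum_congr rfl fun x _ => Finset.sum_comm
      _ = ∑ i : Fin n, ∑ x ∈ C, ∑ y ∈ C, ∑ j : Fin n, (x i * x j) * (y i * y j) :=
          Finset.sum_comm
      _ = ∑ i : Fin n, ∑ x ∈ C, ∑ j : Fin n, ∑ y ∈ C, (x i * x j) * (y i * y j) :=
          Finset.sum_congr rfl fun i _ => Finset.sum_congr rfl fun x _ => Finset.sum_comm
      _ = ∑ i : Fin n, ∑ j : Fin n, ∑ x ∈ C, ∑ y ∈ C, (x i * x j) * (y i * y j) :=
          Finset.sum_congr rfl fun i _ => Finset.sum_comm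
      _ = ∑ i : Fin n, ∑ j : Fin n, (G i j)^2 := by
          refine Finset.sum_congr rfl fun i _ => Finset.sum_congr rfl fun j _ => ?_
          rw [sq, Finset.sum_mul_sum]
  have htr : (C.card : ℝ) = ∑ i : Fin n, G i i := by
    have : ∑ i : Fin n, G i i = ∑ x ∈ C, ∑ i : Fin n, x i * x i := Finset.sum_comm
    rw [this]
    have hx1 : ∀ x ∈ C, ∑ i : Fin n, x i * x i = 1 := by
      intro x hx
      have := real_inner_self_eq_norm_sq x
      rw [inner_eq_sum, hnorm x hx] at this
      simpa using this
    rw [Finset.sum_congr rfl hx1, Finset.sum_const, nsmul_eq_mul, mul_one]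
  have hCS : (∑ i : Fin n, G i i)^2 ≤ (n : ℝ) * ∑ i : Fin n, (G i i)^2 := by
    have := sq_sum_le_card_mul_sum_sq (s := Finset.univ) (f := fun i : Fin n => G i i)
    simpa using this
  have hdiag : ∑ i : Fin n, (G i i)^2 ≤ ∑ i : Fin n, ∑ j : Fin n, (G i j)^2 := by
    refine Finset.sum_le_sum fun i _ => ?_
    exact Finset.single_le_sum (f := fun j => (G i j)^2) (fun j _ => sq_nonneg _)
      (Finset.mem_univ i)
  rw [hS2, htr]
  calc (∑ i : Fin n, G i i)^2 ≤ (n : ℝ) * ∑ i : Fin n, (G i i)^2 := hCS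
    _ ≤ (n : ℝ) * ∑ i : Fin n, ∑ j : Fin n, (G i j)^2 := by
        apply mul_le_mul_of_nonneg_left hdiag (by positivity)

/-- The second-level (τ = 2) universal lower bound for energy on the Euclidean sphere,
for cardinalities `n + 1 ≤ M ≤ 2n`. -/
theorem ulb_energy_sphere_second_level
    (n M : ℕ) (hn : 2 ≤ n) (hM1 : n + 1 ≤ M) (hM2 : M ≤ 2 * n)
    (α₁ ρ₀ ρ₁ : ℝ)
    (hα₁ : α₁ = 1 - (M : ℝ) * ((n : ℝ) - 1) / ((n : ℝ) * ((M : ℝ) - 2)))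
    (hρ₁ : ρ₁ = ((M : ℝ) - 2) / ((M : ℝ) * (1 + α₁)))
    (hρ₀ : ρ₀ = 1 - 1 / (M : ℝ) - ρ₁)
    (h : ℝ → ℝ) (hh : AbsolutelyMonotone h)
    (C : Finset (EuclideanSpace ℝ (Fin n)))
    (hC : (C : Set (EuclideanSpace ℝ (Fin n))) ⊆ Metric.sphere 0 1)
    (hcard : C.card = M) :
    (M : ℝ) ^ 2 * (ρ₀ * h (-1) + ρ₁ * h α₁) ≤ sphereEnergy n h C := by
  letI : DecidableEq (EuclideanSpace ℝ (Fin n)) := Classical.decEq _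
  -- numeric facts
  have hn2 : (2:ℝ) ≤ (n:ℝ) := by exact_mod_cast hn
  have hM3 : (3:ℝ) ≤ (M:ℝ) := by
    have : 3 ≤ M := by omega
    exact_mod_cast this
  have hMn : (n:ℝ) + 1 ≤ (M:ℝ) := by exact_mod_cast hM1
  have hn0 : (0:ℝ) < (n:ℝ) := by linarith
  have hM2' : (0:ℝ) < (M:ℝ) - 2 := by linarith
  have hden : (0:ℝ) < (n:ℝ) * ((M:ℝ) - 2) := mul_pos hn0 hM2'
  have hα₁mem : α₁ ∈ Set.Ioo (-1:ℝ) 1 := by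
    constructor
    · rw [hα₁]
      have hlt : (M:ℝ) * ((n:ℝ) - 1) / ((n:ℝ) * ((M:ℝ) - 2)) < 2 := by
        rw [div_lt_iff₀ hden]; nlinarith [sq_nonneg ((n:ℝ) - 1)]
      linarith
    · rw [hα₁]
      have hpos : 0 < (M:ℝ) * ((n:ℝ) - 1) / ((n:ℝ) * ((M:ℝ) - 2)) :=
        div_pos (by nlinarith) hden
      linarith
  have hα₁1 : (0:ℝ) < α₁ + 1 := by linarith [hα₁mem.1]
  obtain ⟨hA1, hA2, hfle⟩ := key_interp h hh hα₁mem
  set A1 : ℝ := (h α₁ - h (-1)) / (α₁ + 1) with hA1_def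
  set A2 : ℝ := (deriv h α₁ - A1) / (α₁ + 1) with hA2_def
  set F : ℝ → ℝ := fun t => h (-1) + A1 * (t + 1) + A2 * ((t + 1) * (t - α₁)) with hF_def
  have hnorm : ∀ x ∈ C, ‖x‖ = 1 := fun x hx => by
    have := hC hx
    rwa [Metric.mem_sphere, dist_zero_right] at this
  -- Step 1: pointwise bound on the off-diagonal
  have step1 : ∑ p ∈ C.offDiag, F ⟪p.1, p.2⟫ ≤ sphereEnergy n h C := by
    show _ ≤ ∑ p ∈ C.offDiag, h ⟪p.1, p.2⟫
    refine Finset.sum_le_sum fun p hp => ?_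
    obtain ⟨hx, hy, hne⟩ := Finset.mem_offDiag.1 hp
    have h1 := hnorm _ hx
    have h2 := hnorm _ hy
    have habs := abs_real_inner_le_norm p.1 p.2
    rw [h1, h2, mul_one] at habs
    have hlt : ⟪p.1, p.2⟫ < 1 :=
      lt_of_le_of_ne (abs_le.1 habs).2 (fun heq => hne ((inner_eq_one_iff_of_norm_eq_one h1 h2).1 heq))
    exact hfle _ ⟨(abs_le.1 habs).1, hlt⟩
  -- Step 2: diagonal + splitting
  have hsplit : ∑ p ∈ C ×ˢ C, F ⟪p.1, p.2⟫
      = ∑ p ∈ C.diag, F ⟪p.1, p.2⟫ + ∑ p ∈ C.offDiag, F ⟪p.1, p.2⟫ := by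
    rw [← Finset.diag_union_offDiag C, Finset.sum_union (Finset.disjoint_diag_offDiag C)]
  have hdiag : ∑ p ∈ C.diag, F ⟪p.1, p.2⟫ = (M:ℝ) * F 1 := by
    rw [Finset.sum_diag]
    have he : ∀ x ∈ C, F ⟪x, x⟫ = F 1 := fun x hx => by
      rw [real_inner_self_eq_norm_sq, hnorm x hx]; norm_num
    rw [Finset.sum_congr rfl he, Finset.sum_const, hcard, nsmul_eq_mul]
  -- Step 3: expansion of the full sum
  have hFval : ∀ t : ℝ, F t = (h (-1) + A1 - A2 * α₁) + (A1 + A2 * (1 - α₁)) * t + A2 * t^2 :=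
    fun t => by show h (-1) + A1 * (t + 1) + A2 * ((t + 1) * (t - α₁)) = _; ring
  have hexp : ∑ p ∈ C ×ˢ C, F ⟪p.1, p.2⟫
      = (h (-1) + A1 - A2 * α₁) * (M:ℝ)^2
        + (A1 + A2 * (1 - α₁)) * (∑ x ∈ C, ∑ y ∈ C, ⟪x, y⟫)
        + A2 * (∑ x ∈ C, ∑ y ∈ C, ⟪x, y⟫^2) := by
    rw [Finset.sum_product]
    have key : ∀ x ∈ C, ∑ y ∈ C, F ⟪x, y⟫
        = (M:ℝ) * (h (-1) + A1 - A2 * α₁)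
          + (A1 + A2 * (1 - α₁)) * (∑ y ∈ C, ⟪x, y⟫) + A2 * (∑ y ∈ C, ⟪x, y⟫^2) := by
      intro x hx
      rw [Finset.sum_congr rfl (fun y (_ : y ∈ C) => hFval ⟪x, y⟫),
        Finset.sum_add_distrib, Finset.sum_add_distrib, Finset.sum_const, hcard,
        nsmul_eq_mul, ← Finset.mul_sum, ← Finset.mul_sum]
    rw [Finset.sum_congr rfl key, Finset.sum_add_distrib, Finset.sum_add_distrib,
      Finset.sum_const, hcard, nsmul_eq_mul, ← Finset.mul_sum, ← Finset.mul_sum]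
    ring
  -- Step 4: bounds on the moment sums
  have hS1 : 0 ≤ ∑ x ∈ C, ∑ y ∈ C, ⟪x, y⟫ := s1_nonneg n C
  have hS2 : (M:ℝ)^2 ≤ (n:ℝ) * ∑ x ∈ C, ∑ y ∈ C, ⟪x, y⟫^2 := by
    have := gram_bound n (by omega) C hnorm
    rwa [hcard] at this
  have hS2' : (M:ℝ)^2 / (n:ℝ) ≤ ∑ x ∈ C, ∑ y ∈ C, ⟪x, y⟫^2 := by
    rw [div_le_iff₀ hn0, mul_comm]
    exact hS2
  have hb : 0 ≤ A1 + A2 * (1 - α₁) :=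
    add_nonneg hA1 (mul_nonneg hA2 (by linarith [hα₁mem.2]))
  -- Step 5: quadrature identity
  have hhα : h α₁ = h (-1) + A1 * (α₁ + 1) := by
    rw [hA1_def, div_mul_cancel₀ _ hα₁1.ne']; ring
  have hquad : (M:ℝ)^2 * (ρ₀ * h (-1) + ρ₁ * h α₁)
      = (h (-1) + A1 - A2 * α₁) * (M:ℝ)^2 + A2 * ((M:ℝ)^2 / (n:ℝ))
        - (M:ℝ) * (h (-1) + 2 * A1 + A2 * (2 * (1 - α₁))) := by
    rw [hhα]
    exact quadAux (n:ℝ) (M:ℝ) A1 A2 (h (-1)) α₁ ρ₀ ρ₁ hn2 hM3 hMn hα₁ hρ₁ hρ₀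
  have hF1 : F 1 = h (-1) + 2 * A1 + A2 * (2 * (1 - α₁)) := by
    rw [hFval]; ring
  -- Assemble
  have hoff : ∑ p ∈ C.offDiag, F ⟪p.1, p.2⟫
      = ∑ p ∈ C ×ˢ C, F ⟪p.1, p.2⟫ - (M:ℝ) * F 1 := by
    rw [hsplit, hdiag]; ring
  have hA2S2 : A2 * ((M:ℝ)^2 / (n:ℝ)) ≤ A2 * (∑ x ∈ C, ∑ y ∈ C, ⟪x, y⟫^2) :=
    mul_le_mul_of_nonneg_left hS2' hA2
  have hbS1 : 0 ≤ (A1 + A2 * (1 - α₁)) * (∑ x ∈ C, ∑ y ∈ C, ⟪x, y⟫) :=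
    mul_nonneg hb hS1
  calc (M:ℝ)^2 * (ρ₀ * h (-1) + ρ₁ * h α₁)
      = (h (-1) + A1 - A2 * α₁) * (M:ℝ)^2 + A2 * ((M:ℝ)^2 / (n:ℝ)) - (M:ℝ) * F 1 := by
        rw [hquad, hF1]
    _ ≤ ∑ p ∈ C.offDiag, F ⟪p.1, p.2⟫ := by
        rw [hoff, hexp]; linarith
    _ ≤ sphereEnergy n h C := step1
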